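/- If there exist y ∈ X and an n×n real matrix Y such that X ∩ K(y, X) = ∅, then f has no zero in X, i.e., there is no x ∈ X with f(x) = 0. -/

import Mathlib

/-!
By the fundamental theorem of calculus along the segment from `y` to a zero `x` of `f`,
`f x - f y = A (x - y)` where `A` is the average of the Jacobian over that segment. This average
lies in the convex hull of the (compact) image of the segment under the Jacobian, hence in `M`.
Then `x = y - Y f y + (I - Y A)(x - y) ∈ K(y, X)`, contradicting `X ∩ K(y, X) = ∅`.
-/

open MeasureTheory Set

theorem IsCompact.convexHull {E : Type*} [AddCommGroup E] [Module ℝ E] [TopologicalSpace E]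
    [IsTopologicalAddGroup E] [ContinuousSMul ℝ E] [FiniteDimensional ℝ E] {s : Set E}
    (hs : IsCompact s) : IsCompact (convexHull ℝ s) := by
  let P : ℕ → Set E := fun k =>
    (fun p : (Fin k → ℝ) × (Fin k → E) => ∑ i, p.1 i • p.2 i) ''
      (stdSimplex ℝ (Fin k) ×ˢ univ.pi fun _ => s)
  have hP : ∀ k, IsCompact (P k) := fun k =>
    ((isCompact_stdSimplex ℝ _).prod (isCompact_univ_pi fun _ => hs)).image (by fun_prop)
  suffices _root_.convexHull ℝ s = ⋃ k ≤ Module.finrank ℝ E + 1, P k by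
    rw [this]
    exact (finite_Iic _).isCompact_biUnion fun k _ => hP k
  refine Subset.antisymm (fun x hx => ?_) (iUnion₂_subset fun k _ => ?_)
  · obtain ⟨ι, _, z, w, hzs, hz, hw₀, hw₁, rfl⟩ := eq_pos_convex_span_of_mem_convexHull hx
    let e := Fintype.equivFin ι
    have hcard : Fintype.card ι ≤ Module.finrank ℝ E + 1 :=
      hz.card_le_finrank_succ.trans (by grw [Submodule.finrank_le])
    refine mem_biUnion (x := Fintype.card ι) hcard ?_
    refine ⟨(w ∘ e.symm, z ∘ e.symm), ⟨⟨fun i => (hw₀ _).le, ?_⟩, fun i _ => hzs ⟨_, rfl⟩⟩, ?_⟩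
    · rw [← hw₁]; exact e.symm.sum_comp w
    · exact e.symm.sum_comp fun i => w i • z i
  · rintro _ ⟨⟨w, z⟩, ⟨⟨hw₀, hw₁⟩, hz⟩, rfl⟩
    exact (convex_convexHull ℝ s).sum_mem (fun i _ => hw₀ i) hw₁
      fun i _ => subset_convexHull ℝ s (hz i (mem_univ i))

theorem intervalIntegral_mem_convexHull_image {V : Type*} [NormedAddCommGroup V]
    [NormedSpace ℝ V] [FiniteDimensional ℝ V] {g : ℝ → V} (hg : ContinuousOn g (Icc 0 1)) :
    ∫ t in (0 : ℝ)..1, g t ∈ convexHull ℝ (g '' Icc 0 1) := by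
  have : IsProbabilityMeasure (volume.restrict (Ioc (0 : ℝ) 1)) := ⟨by simp⟩
  rw [intervalIntegral.integral_of_le zero_le_one]
  refine (convex_convexHull ℝ _).integral_mem
    (isCompact_Icc.image_of_continuousOn hg).convexHull.isClosed ?_
    (hg.integrableOn_Icc.mono_set Ioc_subset_Icc_self)
  filter_upwards [ae_restrict_mem measurableSet_Ioc] with t ht
  exact subset_convexHull ℝ _ (mem_image_of_mem g (Ioc_subset_Icc_self ht))

variable {E F : Type*} [NormedAddCommGroup E] [NormedSpace ℝ E] [NormedAddCommGroup F]
  [NormedSpace ℝ F] {f : E → F} {f' : E → E →L[ℝ] F} {x y : E}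

open AffineMap in
theorem sub_eq_intervalIntegral_fderiv_lineMap_apply [CompleteSpace F]
    (hf : ∀ z ∈ segment ℝ y x, HasFDerivAt f (f' z) z)
    (hf' : ContinuousOn f' (segment ℝ y x)) :
    f x - f y = (∫ t in (0 : ℝ)..1, f' (lineMap y x t)) (x - y) := by
  have hcont : ContinuousOn (fun t : ℝ => f' (lineMap y x t)) (Icc 0 1) :=
    hf'.comp (by fun_prop) fun _ => lineMap_mem_segment ℝ y x
  have hderiv : ∀ t ∈ uIcc (0 : ℝ) 1,
      HasDerivAt (fun t : ℝ => f (lineMap y x t)) (f' (lineMap y x t) (x - y)) t := by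
    intro t ht
    rw [uIcc_of_le zero_le_one] at ht
    exact (hf _ (lineMap_mem_segment ℝ y x ht)).comp_hasDerivAt t hasDerivAt_lineMap
  rw [ContinuousLinearMap.intervalIntegral_apply (hcont.intervalIntegrable_of_Icc zero_le_one),
    intervalIntegral.integral_eq_sub_of_hasDerivAt hderiv
      ((hcont.clm_apply continuousOn_const).intervalIntegrable_of_Icc zero_le_one)]
  simp

theorem Convex.exists_mem_apply_sub_eq_sub_of_hasFDerivAt [FiniteDimensional ℝ E]
    [FiniteDimensional ℝ F] {C : Set (E →L[ℝ] F)} (hC : Convex ℝ C)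
    (hf : ∀ z ∈ segment ℝ y x, HasFDerivAt f (f' z) z)
    (hf' : ContinuousOn f' (segment ℝ y x)) (hf'C : ∀ z ∈ segment ℝ y x, f' z ∈ C) :
    ∃ A ∈ C, A (x - y) = f x - f y := by
  have hmem := intervalIntegral_mem_convexHull_image
    (hf'.comp (by fun_prop) fun t => lineMap_mem_segment ℝ y x (t := t))
  refine ⟨_, convexHull_min ?_ hC hmem, (sub_eq_intervalIntegral_fderiv_lineMap_apply hf hf').symm⟩
  rintro _ ⟨t, ht, rfl⟩
  exact hf'C _ (lineMap_mem_segment ℝ y x ht)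

theorem krawczyk_empty_intersection_no_root_general (n : ℕ)
    (D : Set (Fin n → ℝ))
    (f : (Fin n → ℝ) → (Fin n → ℝ))
    (J : (Fin n → ℝ) → Matrix (Fin n) (Fin n) ℝ)
    (hf : ∀ z ∈ D, HasFDerivAt f (LinearMap.toContinuousLinearMap (Matrix.mulVecLin (J z))) z)
    (hJc : ContinuousOn J D)
    (a b : Fin n → ℝ)
    (X : Set (Fin n → ℝ)) (hX : X = Set.Icc a b) (hXD : X ⊆ D)
    (M : Set (Matrix (Fin n) (Fin n) ℝ)) (hM : Convex ℝ M)
    (hJM : ∀ z ∈ X, J z ∈ M)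
    (y : Fin n → ℝ) (hy : y ∈ X)
    (Y : Matrix (Fin n) (Fin n) ℝ)
    (hdisj : X ∩ { w | ∃ A ∈ M, ∃ x ∈ X,
      w = y - Y.mulVec (f y) + (1 - Y * A).mulVec (x - y) } = ∅) :
    ¬ ∃ x ∈ X, f x = 0 := by
  rintro ⟨x, hx, hfx⟩
  have hseg : segment ℝ y x ⊆ X := (hX ▸ convex_Icc a b).segment_subset hy hx
  let Φ : Matrix (Fin n) (Fin n) ℝ →ₗ[ℝ] (Fin n → ℝ) →L[ℝ] (Fin n → ℝ) :=
    LinearMap.toContinuousLinearMap.toLinearMap ∘ₗ Matrix.toLin'.toLinearMap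
  obtain ⟨_, ⟨A, hAM, rfl⟩, hA⟩ := (hM.linear_image Φ).exists_mem_apply_sub_eq_sub_of_hasFDerivAt
    (f' := Φ ∘ J) (fun z hz => hf z (hXD (hseg hz)))
    (Φ.continuous_of_finiteDimensional.comp_continuousOn (hJc.mono (hseg.trans hXD)))
    (fun z hz => mem_image_of_mem Φ (hJM z (hseg hz)))
  change A.mulVec (x - y) = f x - f y at hA
  refine (eq_empty_iff_forall_notMem.mp hdisj) x ⟨hx, A, hAM, x, hx, ?_⟩
  rw [Matrix.sub_mulVec, Matrix.one_mulVec, ← Matrix.mulVec_mulVec, hA, hfx]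
  rw [zero_sub, Matrix.mulVec_neg]
  abel

/-- Krawczyk operator, Property 2: if `X ∩ K(y, X) = ∅` for some `y ∈ X` and some real
`n × n` matrix `Y`, then `f` has no zero in the box `X`. -/
theorem krawczyk_empty_intersection_no_root (n : ℕ) (hn : 1 ≤ n)
    (D : Set (Fin n → ℝ)) (hD : IsOpen D)
    (f : (Fin n → ℝ) → (Fin n → ℝ))
    (J : (Fin n → ℝ) → Matrix (Fin n) (Fin n) ℝ)
    (hf : ∀ z ∈ D, HasFDerivAt f (LinearMap.toContinuousLinearMap (Matrix.mulVecLin (J z))) z)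
    (hJc : ContinuousOn J D)
    (a b : Fin n → ℝ) (hab : a ≤ b)
    (X : Set (Fin n → ℝ)) (hX : X = Set.Icc a b) (hXD : X ⊆ D)
    (M : Set (Matrix (Fin n) (Fin n) ℝ)) (hM : Convex ℝ M)
    (hJM : ∀ z ∈ X, J z ∈ M)
    (y : Fin n → ℝ) (hy : y ∈ X)
    (Y : Matrix (Fin n) (Fin n) ℝ)
    (hdisj : X ∩ { w | ∃ A ∈ M, ∃ x ∈ X,
      w = y - Y.mulVec (f y) + (1 - Y * A).mulVec (x - y) } = ∅) :
    ¬ ∃ x ∈ X, f x = 0 :=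
  krawczyk_empty_intersection_no_root_general n D f J hf hJc a b X hX hXD M hM hJM y hy Y hdisj
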